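/- For the trinomial model with parameter point θ₀ = (1 − (2/3)φ₀, (1/3)φ₀, (1/3)φ₀), φ₀ ∈ (0,1), expressed in the planar coordinates given by the isometric map M of the simplex plane to ℝ², the Fisher information matrix for one observation is diagonal with entries 3/φ₀ and 3/(φ₀(3−2φ₀)). Consequently, the scaled map √n·I(θ₀)^{1/2} sends the planar image of θ₀ to (0, μ₀) with μ₀ = √(2n)·(1−φ₀)/√(φ₀(3−2φ₀)). -/

import Mathlib

open Real

/-- The trinomial cell probabilities parameterized by planar coordinates `(u, v)`
(the inverse of the isometric map `M` of the simplex plane to `ℝ²`). -/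
noncomputable def cellProb (i : Fin 3) (x : ℝ × ℝ) : ℝ :=
  ![1/3 + Real.sqrt (2/3) * x.2,
    1/3 - x.1 / Real.sqrt 2 - x.2 / Real.sqrt 6,
    1/3 + x.1 / Real.sqrt 2 - x.2 / Real.sqrt 6] i

/-- The standard basis of `ℝ × ℝ`. -/
def e : Fin 2 → ℝ × ℝ := ![(1, 0), (0, 1)]

/-- The Fisher information matrix of the trinomial model at planar coordinates `x`,
`I(x)ⱼₖ = Σᵢ (∂ⱼ pᵢ)(∂ₖ pᵢ) / pᵢ`. -/
noncomputable def fisher (x : ℝ × ℝ) : Matrix (Fin 2) (Fin 2) ℝ :=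
  fun j k => ∑ i : Fin 3,
    (fderiv ℝ (cellProb i) x (e j)) * (fderiv ℝ (cellProb i) x (e k)) / cellProb i x

/-! In the planar coordinates the cell probabilities are affine, so the Fisher information is
`Σᵢ ∇pᵢ ∇pᵢᵀ / pᵢ` with constant gradients. On the axis `u = 0` the two cells `1, 2` have equal
probability and mirror-image gradients, so the off-diagonal terms cancel; at the planar image of
`θ₀` the cell probabilities are `(1 - 2φ₀/3, φ₀/3, φ₀/3)`, which gives the stated diagonal. -/

noncomputable def cellGrad (i : Fin 3) : ℝ × ℝ →L[ℝ] ℝ :=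
  ![0, -(√2)⁻¹, (√2)⁻¹] i • ContinuousLinearMap.fst ℝ ℝ ℝ +
    ![√(2/3), -(√6)⁻¹, -(√6)⁻¹] i • ContinuousLinearMap.snd ℝ ℝ ℝ

lemma cellProb_eq_const_add_cellGrad (i : Fin 3) :
    cellProb i = fun x => 1/3 + cellGrad i x := by
  funext x
  fin_cases i <;> simp [cellProb, cellGrad] <;> ring

lemma fderiv_cellProb (i : Fin 3) (x : ℝ × ℝ) : fderiv ℝ (cellProb i) x = cellGrad i := by
  rw [cellProb_eq_const_add_cellGrad]
  exact ((cellGrad i).hasFDerivAt.const_add _).fderiv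

lemma cellProb_two_zero_fst (v : ℝ) : cellProb 2 (0, v) = cellProb 1 (0, v) := by
  simp [cellProb]

lemma fisher_zero_fst (v : ℝ) :
    fisher (0, v) = !![1 / cellProb 1 (0, v), 0;
      0, 2/3 / cellProb 0 (0, v) + 1 / (3 * cellProb 1 (0, v))] := by
  have h2 : √2 ^ 2 = 2 := sq_sqrt (by norm_num)
  have h6 : √6 ^ 2 = 6 := sq_sqrt (by norm_num)
  have h23 : √(2/3) ^ 2 = 2/3 := sq_sqrt (by norm_num)
  ext j k
  fin_cases j <;> fin_cases k <;>
    simp only [fisher, Fin.sum_univ_three, fderiv_cellProb, cellGrad, e, cellProb_two_zero_fst,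
      add_apply, smul_apply, ContinuousLinearMap.coe_fst',
      ContinuousLinearMap.coe_snd', smul_eq_mul, Fin.isValue, Fin.zero_eta, Fin.mk_one,
      Matrix.cons_val_zero, Matrix.cons_val_one, Matrix.cons_val, Matrix.of_apply] <;>
    ring_nf <;> simp only [inv_pow, h2, h6, h23] <;> ring

lemma cellProb_zero_planar_theta₀ (φ : ℝ) : cellProb 0 (0, √(2/3) * (1 - φ)) = 1 - 2/3 * φ := by
  have h23 : √(2/3) ^ 2 = 2/3 := sq_sqrt (by norm_num)
  simp only [cellProb, Matrix.cons_val_zero]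
  linear_combination (1 - φ) * h23

lemma cellProb_one_planar_theta₀ (φ : ℝ) : cellProb 1 (0, √(2/3) * (1 - φ)) = φ / 3 := by
  have h : √(2/3) / √6 = 1/3 := by
    rw [← sqrt_div (by norm_num), show (2/3 : ℝ) / 6 = (1/3) ^ 2 by norm_num,
      sqrt_sq (by norm_num)]
  simp only [cellProb, Matrix.cons_val_one, Matrix.cons_val_zero, zero_div, sub_zero]
  rw [mul_div_right_comm, h]
  ring

lemma sqrt_mul_sqrt_three_div_mul_sqrt_two_thirds (n D c : ℝ) :
    √n * √(3 / D) * (√(2/3) * c) = √(2 * n) * c / √D := by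
  have h : √3 * √(2/3) = √2 := by
    rw [← sqrt_mul (by norm_num)]; norm_num
  rw [sqrt_div (by norm_num : (0:ℝ) ≤ 3), sqrt_mul (by norm_num : (0:ℝ) ≤ 2), ← h]
  ring

theorem stmt_17_general (φ₀ : ℝ) (hφ : φ₀ ∈ Set.Ioo (0:ℝ) 1) (n : ℕ) :
    fisher (0, Real.sqrt (2/3) * (1 - φ₀))
        = !![3 / φ₀, 0; 0, 3 / (φ₀ * (3 - 2 * φ₀))] ∧
    Real.sqrt n * Real.sqrt (3 / (φ₀ * (3 - 2 * φ₀))) * (Real.sqrt (2/3) * (1 - φ₀))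
        = Real.sqrt (2 * n) * (1 - φ₀) / Real.sqrt (φ₀ * (3 - 2 * φ₀)) := by
  obtain ⟨hφ0, hφ1⟩ := hφ
  refine ⟨?_, sqrt_mul_sqrt_three_div_mul_sqrt_two_thirds _ _ _⟩
  rw [fisher_zero_fst, cellProb_zero_planar_theta₀, cellProb_one_planar_theta₀]
  have h11 : 1 / (φ₀ / 3) = 3 / φ₀ := by field_simp
  have h22 : 2/3 / (1 - 2/3 * φ₀) + 1 / (3 * (φ₀ / 3)) = 3 / (φ₀ * (3 - 2 * φ₀)) := by
    have : 3 - 2 * φ₀ ≠ 0 := by linarith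
    have : 1 - 2/3 * φ₀ ≠ 0 := by linarith
    field_simp
    ring
  rw [h11, h22]

theorem stmt_17 (φ₀ : ℝ) (hφ : φ₀ ∈ Set.Ioo (0:ℝ) 1) (n : ℕ) (hn : 0 < n) :
    fisher (0, Real.sqrt (2/3) * (1 - φ₀))
        = !![3 / φ₀, 0; 0, 3 / (φ₀ * (3 - 2 * φ₀))] ∧
    Real.sqrt n * Real.sqrt (3 / (φ₀ * (3 - 2 * φ₀))) * (Real.sqrt (2/3) * (1 - φ₀))
        = Real.sqrt (2 * n) * (1 - φ₀) / Real.sqrt (φ₀ * (3 - 2 * φ₀)) :=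
  stmt_17_general φ₀ hφ n
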